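/- arXiv:1007.1049 — 8 statements merged into one kernel-verified Lean document; each statement's English description precedes it below -/
import Mathlib

section
/- Let M be a multiset of n real numbers containing at least n - t elements in the interval [v, v + ε], where n > 3t. Then the trimmed average AVG(M) (average after removing the t smallest and t largest elements) lies in [v, v + ε]. -/
/-- `M` with its `t` smallest and `t` largest elements removed (as a sorted list). -/
noncomputable def trimmed (t : ℕ) (M : Multiset ℝ) : List ℝ :=
  ((M.sort (· ≤ ·)).drop t).take (Multiset.card M - 2 * t)

/-- The trimmed average: the mean of `M` after removing the `t` smallest and `t` largest. -/
noncomputable def tAVG (t : ℕ) (M : Multiset ℝ) : ℝ :=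
  (trimmed t M).sum / ((Multiset.card M : ℝ) - 2 * t)

/-! In the sorted list of `M`, an entry at a position `i` with `t ≤ i < n - t` that lay below `v`
would have all `i + 1 > t` entries up to it below `v`, leaving fewer than `n - t` elements in
`[v, v + ε]`; symmetrically above `v + ε`. So every retained element lies in `[v, v + ε]`, and
hence so does their mean. -/

namespace List

variable {α : Type*}

theorem countP_add_countP_le_length {l : List α} {p q : α → Bool}
    (h : ∀ x ∈ l, p x → ¬q x) : l.countP p + l.countP q ≤ l.length := by
  rw [length_eq_countP_add_countP p]
  have : l.countP q ≤ l.countP (fun x => ¬p x) :=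
    countP_mono_left fun x hx hq => by simpa using mt (h x hx) (by simpa using hq)
  omega

variable [LinearOrder α] {l : List α}

theorem Pairwise.succ_le_countP_lt (hl : l.Pairwise (· ≤ ·)) {i : ℕ} (hi : i < l.length)
    {a : α} (h : l[i] < a) : i + 1 ≤ l.countP (· < a) := by
  have hlt : ∀ x ∈ l.take (i + 1), x < a := by
    intro x hx
    obtain ⟨j, hj, rfl⟩ := mem_take_iff_getElem.mp hx
    exact lt_of_le_of_lt (hl.rel_get_of_le (a := ⟨j, by omega⟩) (b := ⟨i, hi⟩)
      (Fin.mk_le_mk.2 (by omega))) h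
  calc i + 1 = (l.take (i + 1)).length := by rw [length_take]; omega
    _ = (l.take (i + 1)).countP (· < a) := (countP_eq_length.2 (by simpa using hlt)).symm
    _ ≤ l.countP (· < a) := (take_prefix _ _).countP_le

theorem Pairwise.length_sub_le_countP_gt (hl : l.Pairwise (· ≤ ·)) {i : ℕ} (hi : i < l.length)
    {a : α} (h : a < l[i]) : l.length - i ≤ l.countP (a < ·) := by
  have hgt : ∀ x ∈ l.drop i, a < x := by
    intro x hx
    obtain ⟨j, hj, rfl⟩ := mem_iff_getElem.mp hx
    rw [length_drop] at hj
    rw [getElem_drop]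
    exact lt_of_lt_of_le h (hl.rel_get_of_le (a := ⟨i, hi⟩) (b := ⟨i + j, by omega⟩)
      (Fin.mk_le_mk.2 (by omega)))
  calc l.length - i = (l.drop i).length := by simp
    _ = (l.drop i).countP (a < ·) := (countP_eq_length.2 (by simpa using hgt)).symm
    _ ≤ l.countP (a < ·) := (drop_sublist _ _).countP_le

theorem Pairwise.getElem_mem_Icc (hl : l.Pairwise (· ≤ ·)) {a b : α} {t i : ℕ}
    (hcount : l.length ≤ l.countP (· ∈ Set.Icc a b) + t) (hti : t ≤ i) (hit : i + t < l.length) :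
    l[i] ∈ Set.Icc a b := by
  refine ⟨le_of_not_gt fun hlt => ?_, le_of_not_gt fun hgt => ?_⟩
  · have hbelow := hl.succ_le_countP_lt _ hlt
    have := countP_add_countP_le_length (l := l) (p := (· < a)) (q := (· ∈ Set.Icc a b))
      fun x _ hx hmem => by simp_all only [decide_eq_true_eq, Set.mem_Icc]; order
    omega
  · have habove := hl.length_sub_le_countP_gt _ hgt
    have := countP_add_countP_le_length (l := l) (p := (b < ·)) (q := (· ∈ Set.Icc a b))
      fun x _ hx hmem => by simp_all only [decide_eq_true_eq, Set.mem_Icc]; order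
    omega

theorem sum_div_length_mem_Icc {l : List ℝ} (hl : l ≠ []) {a b : ℝ}
    (h : ∀ x ∈ l, x ∈ Set.Icc a b) : l.sum / l.length ∈ Set.Icc a b := by
  have hpos : (0 : ℝ) < l.length := by exact_mod_cast length_pos_iff.2 hl
  have hlo := card_nsmul_le_sum l a fun x hx => (h x hx).1
  have hhi := sum_le_card_nsmul l b fun x hx => (h x hx).2
  rw [nsmul_eq_mul] at hlo hhi
  exact ⟨(le_div_iff₀ hpos).2 (by linarith), (div_le_iff₀ hpos).2 (by linarith)⟩

end List

theorem length_trimmed (t : ℕ) (M : Multiset ℝ) :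
    (trimmed t M).length = Multiset.card M - 2 * t := by
  simp only [trimmed, List.length_take, List.length_drop, Multiset.length_sort]
  omega

theorem exists_getElem_sort_of_mem_trimmed {t : ℕ} {M : Multiset ℝ} {x : ℝ}
    (hx : x ∈ trimmed t M) :
    ∃ (i : ℕ) (hi : i < (M.sort (· ≤ ·)).length),
      t ≤ i ∧ i + t < Multiset.card M ∧ (M.sort (· ≤ ·))[i] = x := by
  obtain ⟨j, hj, rfl⟩ := List.mem_take_iff_getElem.mp hx
  simp only [List.length_drop, Multiset.length_sort] at hj
  exact ⟨t + j, by rw [Multiset.length_sort]; omega, by omega, by omega, (List.getElem_drop ..).symm⟩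

theorem tAVG_eq_sum_div_length {t : ℕ} {M : Multiset ℝ} (h : 2 * t ≤ Multiset.card M) :
    tAVG t M = (trimmed t M).sum / (trimmed t M).length := by
  rw [tAVG, length_trimmed, Nat.cast_sub h]
  push_cast
  rfl

theorem mem_Icc_of_mem_trimmed {t : ℕ} {M : Multiset ℝ} {a b : ℝ}
    (hcount : Multiset.card M ≤ Multiset.card (M.filter (· ∈ Set.Icc a b)) + t) {x : ℝ}
    (hx : x ∈ trimmed t M) : x ∈ Set.Icc a b := by
  obtain ⟨i, hi, hti, hit, rfl⟩ := exists_getElem_sort_of_mem_trimmed hx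
  have hsort : ((M.sort (· ≤ ·) : List ℝ) : Multiset ℝ) = M := M.sort_eq _
  refine (M.pairwise_sort _).getElem_mem_Icc ?_ hti (by simpa using hit)
  rw [← hsort, Multiset.filter_coe, Multiset.coe_card, Multiset.coe_card,
    ← List.countP_eq_length_filter] at hcount
  exact hcount

theorem stmt_1_general (n t : ℕ) (ht : 3 * t < n) (v ε : ℝ)
    (M : Multiset ℝ) (hM : Multiset.card M = n)
    (h : n - t ≤ Multiset.card (M.filter (fun x => v ≤ x ∧ x ≤ v + ε))) :
    tAVG t M ∈ Set.Icc v (v + ε) := by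
  subst hM
  rw [tAVG_eq_sum_div_length (by omega)]
  refine List.sum_div_length_mem_Icc ?_ (fun x hx => mem_Icc_of_mem_trimmed ?_ hx)
  · rw [← List.length_pos_iff, length_trimmed]
    omega
  · change _ ≤ Multiset.card (M.filter (fun x => v ≤ x ∧ x ≤ v + ε)) + t
    omega

theorem stmt_1 (n t : ℕ) (ht : 3 * t < n) (v ε : ℝ) (hε : 0 ≤ ε)
    (M : Multiset ℝ) (hM : Multiset.card M = n)
    (h : n - t ≤ Multiset.card (M.filter (fun x => v ≤ x ∧ x ≤ v + ε))) :
    tAVG t M ∈ Set.Icc v (v + ε) :=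
  stmt_1_general n t ht v ε M hM h
end

section
/- Let M be a multiset of n - x real numbers with x ≤ t and n > 3t, and let M1 and M2 each be multisets of size n obtained from M by adding x real numbers, all of which (together with M) lie in the interval [L, H]. Then |AVG(M1) - AVG(M2)| ≤ (H - L) · x / (n - 2t). -/
/-! Adding `x` elements to a multiset moves each order statistic by at most `x` places:
the `i`-th smallest element of `M + A` is at most the `i`-th smallest of `M`, which is at most
the `(i + x)`-th smallest of `M + A`. So the trimmed window of `M + A₁` is dominated termwise by
the window of `M + A₂` shifted up by `x` places, which stays inside the sorted list as `x ≤ t`;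
and shifting a window of values in `[L, H]` by `x` places raises its sum by at most `x (H - L)`.
Exchanging `A₁` and `A₂` bounds the difference of trimmed sums in absolute value. -/

namespace List

theorem Sublist.exists_getElem_eq {α : Type*} {l l' : List α} (h : l <+ l') {i : ℕ}
    (hi : i < l.length) :
    ∃ (j : ℕ) (hj : j < l'.length), i ≤ j ∧ j + l.length ≤ i + l'.length ∧ l[i] = l'[j] := by
  obtain ⟨f, hf⟩ := sublist_iff_exists_orderEmbedding_getElem?_eq.mp h
  have hlast : f (l.length - 1) < l'.length := by
    have := hf (l.length - 1)
    rw [getElem?_eq_getElem (by omega), eq_comm, getElem?_eq_some_iff] at this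
    exact this.1
  -- the `l.length - 1 - i` entries after `l[i]` need distinct positions after `f i` in `l'`
  have hgap := f.strictMono.add_le_nat (l.length - 1 - i) i
  rw [show l.length - 1 - i + i = l.length - 1 by omega] at hgap
  have hfi : f i < l'.length := by omega
  refine ⟨f i, hfi, f.strictMono.le_apply, by omega, ?_⟩
  have := hf i
  rwa [getElem?_eq_getElem hi, getElem?_eq_getElem hfi, Option.some_inj] at this

variable {α : Type*} [Preorder α] {l l' : List α}

theorem Sublist.getElem_le_getElem_of_sortedLE (h : l <+ l') (hl' : l'.SortedLE) {i : ℕ}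
    (hi : i < l.length) : l'[i]'(hi.trans_le h.length_le) ≤ l[i] := by
  obtain ⟨j, hj, hij, -, hget⟩ := h.exists_getElem_eq hi
  exact hget ▸ hl'.getElem_le_getElem_of_le hij

theorem Sublist.getElem_le_getElem_add_of_sortedLE (h : l <+ l') (hl' : l'.SortedLE) {i : ℕ}
    (hi : i < l.length) :
    l[i] ≤ l'[i + (l'.length - l.length)]'(by have := h.length_le; omega) := by
  obtain ⟨j, hj, -, hji, hget⟩ := h.exists_getElem_eq hi
  exact hget ▸ hl'.getElem_le_getElem_of_le (by omega)

theorem sum_take_drop_eq_sum_range {M : Type*} [AddCommMonoid M] (l : List M) (a b : ℕ) :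
    ((l.drop a).take b).sum = ∑ i ∈ Finset.range b, l.getD (a + i) 0 := by
  induction b with
  | zero => simp
  | succ b ih =>
    rw [take_add_one, sum_append, ih, Finset.sum_range_succ, getElem?_drop, getD_eq_getElem?_getD]
    cases l[a + b]? <;> simp

end List

theorem Multiset.sort_sublist_sort_of_le {α : Type*} [LinearOrder α] {s u : Multiset α}
    (h : s ≤ u) : (s.sort (· ≤ ·)).Sublist (u.sort (· ≤ ·)) :=
  List.sublist_of_subperm_of_pairwise
    (by rwa [← Multiset.coe_le, Multiset.sort_eq, Multiset.sort_eq])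
    (Multiset.pairwise_sort _ _) (Multiset.pairwise_sort _ _)

open Finset in
theorem Finset.sum_range_shift_le_add_nsmul {β : Type*} [AddCommGroup β] [PartialOrder β]
    [IsOrderedAddMonoid β] {f : ℕ → β} {L H : β} {x N : ℕ}
    (hf : ∀ i < x + N, f i ∈ Set.Icc L H) :
    ∑ i ∈ range N, f (x + i) ≤ ∑ i ∈ range N, f i + x • (H - L) := by
  have hsplit := sum_range_add f x N
  rw [add_comm x N, sum_range_add] at hsplit
  have htop : ∑ i ∈ range x, f (N + i) ≤ x • H := by
    simpa using sum_le_sum (s := range x) fun i hi =>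
      (hf (N + i) (by have := mem_range.1 hi; omega)).2
  have hbot : x • L ≤ ∑ i ∈ range x, f i := by
    simpa using sum_le_sum (s := range x) fun i hi =>
      (hf i (by have := mem_range.1 hi; omega)).1
  rw [nsmul_sub]
  calc ∑ i ∈ range N, f (x + i)
      = ∑ i ∈ range N, f i + (∑ i ∈ range x, f (N + i) - ∑ i ∈ range x, f i) := by
        rw [← add_sub_assoc, eq_sub_iff_add_eq, add_comm, hsplit]
    _ ≤ _ := add_le_add le_rfl (sub_le_sub htop hbot)

open Multiset in
theorem trimmed_sum_le_add {t x : ℕ} {L H : ℝ} (M A₁ A₂ : Multiset ℝ) (hx : x ≤ t)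
    (ht : 2 * t ≤ card M + x) (hA₁ : card A₁ = x) (hA₂ : card A₂ = x)
    (hB₂ : ∀ y ∈ M + A₂, y ∈ Set.Icc L H) :
    (trimmed t (M + A₁)).sum ≤ (trimmed t (M + A₂)).sum + x * (H - L) := by
  set s := M.sort (· ≤ ·)
  set l₁ := (M + A₁).sort (· ≤ ·)
  set l₂ := (M + A₂).sort (· ≤ ·)
  set N := card M + x - 2 * t
  have hlen : s.length = card M := length_sort _
  have hlen₁ : l₁.length = card M + x := by rw [length_sort, card_add, hA₁]
  have hlen₂ : l₂.length = card M + x := by rw [length_sort, card_add, hA₂]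
  have hsum₁ : (trimmed t (M + A₁)).sum = ∑ i ∈ Finset.range N, l₁.getD (t + i) 0 := by
    rw [trimmed, List.sum_take_drop_eq_sum_range, card_add, hA₁]
  have hsum₂ : (trimmed t (M + A₂)).sum = ∑ i ∈ Finset.range N, l₂.getD (t + i) 0 := by
    rw [trimmed, List.sum_take_drop_eq_sum_range, card_add, hA₂]
  have hinterlace : ∀ i ∈ Finset.range N, l₁.getD (t + i) 0 ≤ l₂.getD (t + (x + i)) 0 := by
    intro i hi
    have hi : t + i < s.length := by have := Finset.mem_range.1 hi; omega
    have hshift : t + (x + i) = t + i + (l₂.length - s.length) := by omega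
    rw [hshift, List.getD_eq_getElem _ _ (by omega), List.getD_eq_getElem _ _ (by omega)]
    exact ((sort_sublist_sort_of_le (le_add_right M A₁)).getElem_le_getElem_of_sortedLE
      (pairwise_sort _ _).sortedLE hi).trans
      ((sort_sublist_sort_of_le (le_add_right M A₂)).getElem_le_getElem_add_of_sortedLE
      (pairwise_sort _ _).sortedLE hi)
  have hbounds : ∀ j < x + N, l₂.getD (t + j) 0 ∈ Set.Icc L H := by
    intro j hj
    rw [List.getD_eq_getElem _ _ (by omega)]
    exact hB₂ _ ((mem_sort _).1 (List.getElem_mem _))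
  calc (trimmed t (M + A₁)).sum ≤ ∑ i ∈ Finset.range N, l₂.getD (t + (x + i)) 0 := by
        rw [hsum₁]; exact Finset.sum_le_sum hinterlace
    _ ≤ (trimmed t (M + A₂)).sum + x * (H - L) := by
        rw [hsum₂, ← nsmul_eq_mul]
        exact Finset.sum_range_shift_le_add_nsmul hbounds

theorem stmt_2_general (n t x : ℕ) (hx : x ≤ t) (ht : 3 * t < n) (L H : ℝ)
    (M A₁ A₂ : Multiset ℝ)
    (hM : Multiset.card M = n - x) (hA₁ : Multiset.card A₁ = x) (hA₂ : Multiset.card A₂ = x)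
    (hB₁ : ∀ y ∈ M + A₁, y ∈ Set.Icc L H) (hB₂ : ∀ y ∈ M + A₂, y ∈ Set.Icc L H) :
    |tAVG t (M + A₁) - tAVG t (M + A₂)| ≤ (H - L) * x / ((n : ℝ) - 2 * t) := by
  have hcard₁ : Multiset.card (M + A₁) = n := by rw [Multiset.card_add, hM, hA₁]; omega
  have hcard₂ : Multiset.card (M + A₂) = n := by rw [Multiset.card_add, hM, hA₂]; omega
  have hpos : (0 : ℝ) < n - 2 * t := by
    rw [sub_pos]; exact_mod_cast (by omega : 2 * t < n)
  have h₁₂ := trimmed_sum_le_add M A₁ A₂ hx (by omega) hA₁ hA₂ hB₂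
  have h₂₁ := trimmed_sum_le_add M A₂ A₁ hx (by omega) hA₂ hA₁ hB₁
  rw [tAVG, tAVG, hcard₁, hcard₂, ← sub_div, abs_div, abs_of_pos hpos]
  gcongr
  rw [abs_sub_le_iff]
  constructor <;> linarith

theorem stmt_2 (n t x : ℕ) (hx : x ≤ t) (ht : 3 * t < n) (L H : ℝ) (hLH : L ≤ H)
    (M A₁ A₂ : Multiset ℝ)
    (hM : Multiset.card M = n - x) (hA₁ : Multiset.card A₁ = x) (hA₂ : Multiset.card A₂ = x)
    (hB₁ : ∀ y ∈ M + A₁, y ∈ Set.Icc L H) (hB₂ : ∀ y ∈ M + A₂, y ∈ Set.Icc L H) :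
    |tAVG t (M + A₁) - tAVG t (M + A₂)| ≤ (H - L) * x / ((n : ℝ) - 2 * t) :=
  stmt_2_general n t x hx ht L H M A₁ A₂ hM hA₁ hA₂ hB₁ hB₂
end

section
/- Let D_1, D_2, ... be a sequence of nonnegative reals (interval diameters) with D_{r+1} ≤ D_r · (a_r / c) for each r, where a_r ≥ 0, ∑_{r=1}^k a_r ≤ t, and c > 0. Then D_{k+1} ≤ D_1 · (t/c)^k · (1/k^k). -/
theorem stmt_5 (k : ℕ) (hk : 1 ≤ k) (c t : ℝ) (hc : 0 < c) (ht : 0 ≤ t)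
    (D a : ℕ → ℝ) (hD : ∀ r, 0 ≤ D r) (ha : ∀ r, 0 ≤ a r)
    (hrec : ∀ r, 1 ≤ r → r ≤ k → D (r + 1) ≤ D r * (a r / c))
    (hsum : ∑ r ∈ Finset.Icc 1 k, a r ≤ t) :
    D (k + 1) ≤ D 1 * (t / c) ^ k * (1 / (k : ℝ) ^ k) := by
  have hk0 : (0:ℝ) < (k:ℝ) := by exact_mod_cast hk
  -- Step 1: unfold the recurrence
  have step1 : ∀ m, m ≤ k → D (m + 1) ≤ D 1 * ∏ r ∈ Finset.Icc 1 m, (a r / c) := by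
    intro m
    induction m with
    | zero => simp
    | succ n ih =>
      intro hle
      have hn : n ≤ k := Nat.le_of_succ_le hle
      have h1 := hrec (n+1) (Nat.succ_le_succ (Nat.zero_le n)) hle
      have h2 := ih hn
      have hnn : 0 ≤ a (n+1) / c := div_nonneg (ha _) hc.le
      calc D (n + 1 + 1) ≤ D (n+1) * (a (n+1) / c) := h1
        _ ≤ (D 1 * ∏ r ∈ Finset.Icc 1 n, (a r / c)) * (a (n+1) / c) :=
            mul_le_mul_of_nonneg_right h2 hnn
        _ = D 1 * ∏ r ∈ Finset.Icc 1 (n+1), (a r / c) := by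
            rw [Finset.prod_Icc_succ_top (Nat.succ_le_succ (Nat.zero_le n)), mul_assoc]
  have h1 := step1 k le_rfl
  -- Step 2: AM-GM
  have hcard : (Finset.Icc 1 k).card = k := by simp
  have amgm := Real.geom_mean_le_arith_mean_weighted (Finset.Icc 1 k)
      (fun _ => 1 / (k:ℝ)) a (fun i _ => by positivity)
      (by simp [hcard]; field_simp) (fun i _ => ha i)
  have hsum2 : ∑ i ∈ Finset.Icc 1 k, (1 / (k:ℝ)) * a i ≤ t / k := by
    calc ∑ i ∈ Finset.Icc 1 k, (1 / (k:ℝ)) * a i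
        = 1/(k:ℝ) * ∑ i ∈ Finset.Icc 1 k, a i := by rw [Finset.mul_sum]
      _ ≤ 1/(k:ℝ) * t := mul_le_mul_of_nonneg_left hsum (by positivity)
      _ = t / k := by ring
  have hglem : (∏ i ∈ Finset.Icc 1 k, a i ^ (1 / (k:ℝ))) ^ k = ∏ i ∈ Finset.Icc 1 k, a i := by
    rw [← Finset.prod_pow]
    refine Finset.prod_congr rfl (fun i _ => ?_)
    rw [← Real.rpow_natCast (a i ^ (1/(k:ℝ))) k, ← Real.rpow_mul (ha i)]
    rw [one_div, inv_mul_cancel₀ hk0.ne', Real.rpow_one]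
  have hprod : ∏ i ∈ Finset.Icc 1 k, a i ≤ (t / k) ^ k := by
    rw [← hglem]
    refine pow_le_pow_left₀ (Finset.prod_nonneg fun i _ => Real.rpow_nonneg (ha i) _) ?_ k
    exact le_trans amgm hsum2
  -- Combine
  have hprodc : ∏ r ∈ Finset.Icc 1 k, (a r / c) = (∏ r ∈ Finset.Icc 1 k, a r) / c ^ k := by
    rw [Finset.prod_div_distrib, Finset.prod_const, hcard]
  have : D 1 * ∏ r ∈ Finset.Icc 1 k, (a r / c) ≤ D 1 * ((t/k)^k / c^k) := by
    rw [hprodc]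
    refine mul_le_mul_of_nonneg_left ?_ (hD 1)
    exact div_le_div_of_nonneg_right hprod (by positivity) |>.trans_eq rfl
  refine h1.trans (this.trans (le_of_eq ?_))
  rw [div_pow, div_pow]
  ring
end

section
/- Let r = ⌈log n / log log n⌉ and suppose D_{r+1} ≤ D_1 / r^r where D_1 = H - L > 0. Then for sufficiently large n, D_{r+1} ≤ (H - L)/√n, and consequently if additionally D_{2r+1} ≤ D_{r+1} / r^r then D_{2r+1} ≤ (H - L)/n. -/
/-!
Writing `ℓ = log n` and `t = log ℓ`, the ceiling `r` satisfies `log r ≥ log (ℓ / t) = t - log t ≥ t / 2`,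
so `r log r ≥ (ℓ / t) (t / 2) = ℓ / 2`, i.e. `r ^ r ≥ √n`. One factor `r ^ r` of contraction therefore
shrinks the diameter by `√n`, and two of them by `n`.
-/

open Real

lemma log_le_half_self {t : ℝ} (ht : 0 < t) : log t ≤ t / 2 := by
  have hsqrt : log (√t) ≤ √t - 1 := log_le_sub_one_of_pos (sqrt_pos.mpr ht)
  rw [log_sqrt ht.le] at hsqrt
  nlinarith [sq_nonneg (√t - 2), sq_sqrt ht.le]

lemma half_le_mul_log_of_div_log_le {ℓ y : ℝ} (hℓ : 1 < ℓ) (hy : ℓ / log ℓ ≤ y) :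
    ℓ / 2 ≤ y * log y := by
  have ht : 0 < log ℓ := log_pos hℓ
  have hx : 0 < ℓ / log ℓ := div_pos (by linarith) ht
  have hlog_x : log ℓ / 2 ≤ log (ℓ / log ℓ) := by
    rw [log_div (by linarith) ht.ne']
    linarith [log_le_half_self ht]
  have hlog_y : log ℓ / 2 ≤ log y := hlog_x.trans (log_le_log hx hy)
  calc ℓ / 2 = ℓ / log ℓ * (log ℓ / 2) := by field_simp
    _ ≤ y * log y := mul_le_mul hy hlog_y (by positivity) (hx.le.trans hy)

lemma sqrt_le_pow_self_of_log_div_log_log_le {n : ℝ} {r : ℕ} (hn_pos : 0 < n) (hn : 1 < log n)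
    (hr : log n / log (log n) ≤ r) : √n ≤ (r : ℝ) ^ r := by
  have hr_pos : 0 < (r : ℝ) := (div_pos (by linarith) (log_pos hn)).trans_le hr
  rw [← log_le_log_iff (sqrt_pos.mpr hn_pos) (by positivity), log_sqrt hn_pos.le, log_pow]
  exact half_le_mul_log_of_div_log_le hn hr

theorem stmt_8 :
    ∃ N : ℕ, ∀ n : ℕ, N ≤ n →
      ∀ (L H : ℝ) (D : ℕ → ℝ), L < H → (∀ i, 0 ≤ D i) → D 1 = H - L →
        ∀ r : ℕ, r = ⌈Real.log n / Real.log (Real.log n)⌉₊ →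
          D (r + 1) ≤ D 1 / (r : ℝ) ^ r →
            D (r + 1) ≤ (H - L) / Real.sqrt n ∧
              (D (2 * r + 1) ≤ D (r + 1) / (r : ℝ) ^ r → D (2 * r + 1) ≤ (H - L) / n) := by
  refine ⟨3, fun n hn L H D hLH _ hD_one r hr hD_r ↦ ?_⟩
  have hn_three : (3 : ℝ) ≤ n := by exact_mod_cast hn
  have hn_pos : (0 : ℝ) < n := by linarith
  have hlog_n : 1 < log n := by
    rw [lt_log_iff_exp_lt hn_pos]
    linarith [exp_one_lt_d9]
  have hsqrt : √n ≤ (r : ℝ) ^ r :=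
    sqrt_le_pow_self_of_log_div_log_log_le hn_pos hlog_n (hr ▸ Nat.le_ceil _)
  have hsqrt_pos : 0 < √(n : ℝ) := sqrt_pos.mpr hn_pos
  have hHL : 0 ≤ H - L := by linarith
  have hfirst : D (r + 1) ≤ (H - L) / √n := by
    rw [hD_one] at hD_r
    exact hD_r.trans (div_le_div_of_nonneg_left hHL hsqrt_pos hsqrt)
  refine ⟨hfirst, fun hD_2r ↦ ?_⟩
  calc D (2 * r + 1) ≤ D (r + 1) / (r : ℝ) ^ r := hD_2r
    _ ≤ (H - L) / √n / √n := div_le_div₀ (by positivity) hfirst hsqrt_pos hsqrt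
    _ = (H - L) / n := by rw [div_div, mul_self_sqrt hn_pos.le]
end

section
/- Majority agreement lemma: let G be a set of n nodes, Z ⊆ G faulty with |Z| ≤ t and n > 3t. In an abstract gradecast round, suppose for every q ∉ Z and every non-faulty p, c_p(q) = 2 and v_p(q) = v(q) (the true value). If some non-faulty node p sees at least n - t senders q with confidence 2 all gradecasting the same value m (i.e., #maj_p ≥ n - t), then every non-faulty node p' sees at least n - 2t > t senders with confidence ≥ 1 and value m, and m is the strict majority value among confidence-≥1 values at p' whenever n - 2t exceeds the count of any other value. In particular, if n > 3t, every non-faulty node's majority-of-confidence-≥1 value equals m. -/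
open Finset

theorem stmt_13 {ι : Type*} [Fintype ι] [DecidableEq ι] (n t : ℕ)
    (hn : Fintype.card ι = n) (ht : 3 * t < n)
    (Z : Finset ι) (hZ : Z.card ≤ t)
    (v : ι → ι → ℝ) (c : ι → ι → ℕ) (vtrue : ι → ℝ)
    (hc2 : ∀ p q, c p q ≤ 2)
    (hagree : ∀ p p' q, p ∉ Z → p' ∉ Z → 0 < c p q → 0 < c p' q → v p q = v p' q)
    (hdiff : ∀ p p' q, p ∉ Z → p' ∉ Z → |(c p q : ℤ) - (c p' q : ℤ)| ≤ 1)
    (hhonest : ∀ q, q ∉ Z → ∀ p, p ∉ Z → c p q = 2 ∧ v p q = vtrue q)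
    -- `maj p` is a most common value among values received by `p` with confidence ≥ 1
    (maj : ι → ℝ)
    (hmaj_mem : ∀ p, p ∉ Z →
      0 < (univ.filter (fun q => 1 ≤ c p q ∧ v p q = maj p)).card)
    (hmaj_max : ∀ p, p ∉ Z → ∀ w : ℝ,
      (univ.filter (fun q => 1 ≤ c p q ∧ v p q = w)).card ≤
        (univ.filter (fun q => 1 ≤ c p q ∧ v p q = maj p)).card)
    -- some non-faulty node `p` sees `m` at least `n - t` times with confidence 2
    (p : ι) (hp : p ∉ Z) (m : ℝ)
    (hcount : n - t ≤ (univ.filter (fun q => c p q = 2 ∧ v p q = m)).card) :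
    t < n - 2 * t ∧
      ∀ p', p' ∉ Z →
        n - 2 * t ≤ (univ.filter (fun q => 1 ≤ c p' q ∧ v p' q = m)).card ∧
          maj p' = m := by

  classical
  set A := univ.filter (fun q => c p q = 2 ∧ v p q = m) with hA
  have hAcard : n - t ≤ A.card := hcount
  have hAuniv : A.card ≤ n := by
    rw [← hn, ← card_univ]; exact card_le_card (filter_subset _ _)
  refine ⟨by omega, fun p' hp' => ?_⟩
  set B := univ.filter (fun q => 1 ≤ c p' q ∧ v p' q = m) with hB
  have hsub : A \ Z ⊆ B := by
    intro q hq
    simp only [mem_sdiff, hA, mem_filter, mem_univ, true_and] at hq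
    obtain ⟨⟨hcq, hvq⟩, hqZ⟩ := hq
    obtain ⟨hc', hv'⟩ := hhonest q hqZ p' hp'
    obtain ⟨_, hv⟩ := hhonest q hqZ p hp
    simp only [hB, mem_filter, mem_univ, true_and]
    exact ⟨by omega, by rw [hv', ← hv, hvq]⟩
  have hBcard : n - 2 * t ≤ B.card := by
    have h1 : A.card - Z.card ≤ (A \ Z).card := le_card_sdiff Z A
    have h2 : (A \ Z).card ≤ B.card := card_le_card hsub
    omega
  refine ⟨hBcard, ?_⟩
  by_contra hne
  set W := univ.filter (fun q => 1 ≤ c p' q ∧ v p' q = maj p') with hW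
  have hdisj : Disjoint W A := by
    rw [disjoint_left]
    intro q hqW hqA
    simp only [hW, mem_filter, mem_univ, true_and] at hqW
    simp only [hA, mem_filter, mem_univ, true_and] at hqA
    have := hagree p p' q hp hp' (by omega) (by omega)
    exact hne (by rw [← hqW.2, ← this, hqA.2])
  have hWcard : W.card + A.card ≤ n := by
    rw [← hn, ← card_univ, ← card_union_of_disjoint hdisj]
    exact card_le_card (subset_univ _)
  have hmax := hmaj_max p' hp' m
  rw [← hB, ← hW] at hmax
  omega
end

section
/- Validity persistence: if all non-faulty nodes (of which there are at least n - t, with n > 3t) gradecast the same value v, then at every non-faulty node p, the value v appears at least n - t times with confidence 2 among received gradecasts, so n - t ≥ 2t + 1 > n/2 occurrences, and v is the unique strict-majority value among values received with confidence ≥ 1; hence maj_p = v. -/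
open Finset

theorem stmt_14 {ι : Type*} [Fintype ι] [DecidableEq ι] (n t : ℕ)
    (hn : Fintype.card ι = n) (ht : 3 * t < n)
    (Z : Finset ι) (hZ : Z.card ≤ t)
    (v : ι → ι → ℝ) (c : ι → ι → ℕ) (vin : ι → ℝ) (vconst : ℝ)
    (hc2 : ∀ p q, c p q ≤ 2)
    (hagree : ∀ p p' q, p ∉ Z → p' ∉ Z → 0 < c p q → 0 < c p' q → v p q = v p' q)
    (hhonest : ∀ q, q ∉ Z → ∀ p, p ∉ Z → c p q = 2 ∧ v p q = vin q)
    -- all non-faulty nodes gradecast the same value `vconst`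
    (hsame : ∀ q, q ∉ Z → vin q = vconst)
    -- `maj p` is a most common value among values received by `p` with confidence ≥ 1
    (maj : ι → ℝ)
    (hmaj_mem : ∀ p, p ∉ Z →
      0 < (univ.filter (fun q => 1 ≤ c p q ∧ v p q = maj p)).card)
    (hmaj_max : ∀ p, p ∉ Z → ∀ w : ℝ,
      (univ.filter (fun q => 1 ≤ c p q ∧ v p q = w)).card ≤
        (univ.filter (fun q => 1 ≤ c p q ∧ v p q = maj p)).card) :
    2 * t + 1 ≤ n - t ∧ n < 2 * (n - t) ∧
      ∀ p, p ∉ Z →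
        n - t ≤ (univ.filter (fun q => c p q = 2 ∧ v p q = vconst)).card ∧
          maj p = vconst := by
  refine ⟨by omega, by omega, fun p hp => ?_⟩
  have hsub : Zᶜ ⊆ univ.filter (fun q => c p q = 2 ∧ v p q = vconst) := by
    intro q hq
    rw [mem_compl] at hq
    obtain ⟨h1, h2⟩ := hhonest q hq p hp
    simp [h1, h2, hsame q hq]
  have hcard : n - t ≤ (univ.filter (fun q => c p q = 2 ∧ v p q = vconst)).card := by
    have := card_le_card hsub
    rw [card_compl, hn] at this
    omega
  refine ⟨hcard, ?_⟩
  by_contra hne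
  have hsub2 : (univ.filter (fun q => c p q = 2 ∧ v p q = vconst)) ⊆
      (univ.filter (fun q => 1 ≤ c p q ∧ v p q = vconst)) := by
    intro q hq
    simp only [mem_filter] at hq ⊢
    exact ⟨hq.1, by omega, hq.2.2⟩
  have h1 : n - t ≤ (univ.filter (fun q => 1 ≤ c p q ∧ v p q = vconst)).card :=
    le_trans hcard (card_le_card hsub2)
  have h2 : n - t ≤ (univ.filter (fun q => 1 ≤ c p q ∧ v p q = maj p)).card :=
    le_trans h1 (hmaj_max p hp vconst)
  have hdisj : Disjoint (univ.filter (fun q => 1 ≤ c p q ∧ v p q = vconst))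
      (univ.filter (fun q => 1 ≤ c p q ∧ v p q = maj p)) := by
    rw [disjoint_left]
    intro q hq1 hq2
    simp only [mem_filter] at hq1 hq2
    exact hne (hq2.2.2 ▸ hq1.2.2.symm ▸ rfl)
  have := card_union_of_disjoint hdisj ▸ card_le_card
    (union_subset (subset_univ _) (subset_univ _) :
      (univ.filter (fun q => 1 ≤ c p q ∧ v p q = vconst)) ∪
      (univ.filter (fun q => 1 ≤ c p q ∧ v p q = maj p)) ⊆ univ)
  rw [card_univ, hn] at this
  omega
end

section
/- Early stopping bound: in a run with f ≤ t actual faulty nodes where in each of the first r iterations either all non-faulty nodes compute the same maj (terminating within one more iteration) or at least one new faulty node joins the common BAD set, the algorithm terminates within min(f + 2, t + 1) iterations. -/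
theorem stmt_15 {α : Type*} [DecidableEq α] (t f : ℕ) (hf : f ≤ t)
    (Z : Finset α) (hZ : Z.card = f)
    (C : ℕ → Finset α) (hC1 : C 1 = ∅)
    (hCmono : ∀ r, C r ⊆ C (r + 1))
    (hCZ : ∀ r, C r ⊆ Z)
    (agreeing terminated : ℕ → Prop)
    (hterm_mono : ∀ r, terminated r → terminated (r + 1))
    (hagree_term : ∀ r, agreeing r → terminated (r + 1))
    (hfull_term : ∀ r, Z ⊆ C r → terminated r)
    (hstep : ∀ r, 1 ≤ r → agreeing r ∨ (C r).card < (C (r + 1)).card) :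
    terminated (min (f + 2) (t + 1)) := by
  have tmono : ∀ a b, a ≤ b → terminated a → terminated b := by
    intro a b hab ha
    induction b with
    | zero => exact Nat.le_zero.mp hab ▸ ha
    | succ n ih =>
      rcases Nat.lt_or_ge a (n+1) with h | h
      · exact hterm_mono n (ih (by omega))
      · have : a = n + 1 := by omega
        exact this ▸ ha
  -- key: terminated (f + 1)
  have key : terminated (f + 1) := by
    by_cases h : ∃ s, 1 ≤ s ∧ s ≤ f ∧ agreeing s
    · obtain ⟨s, hs1, hsf, hag⟩ := h
      exact tmono (s + 1) (f + 1) (by omega) (hagree_term s hag)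
    · push_neg at h
      have grow : ∀ r, r ≤ f → r ≤ (C (r + 1)).card := by
        intro r
        induction r with
        | zero => intro _; exact Nat.zero_le _
        | succ n ih =>
          intro hn
          have hna : ¬ agreeing (n + 1) := h (n + 1) (by omega) (by omega)
          have := hstep (n + 1) (by omega)
          rcases this with hag | hlt
          · exact absurd hag hna
          · have := ih (by omega)
            omega
      have hcard : f ≤ (C (f + 1)).card := grow f le_rfl
      have hsub : C (f + 1) ⊆ Z := hCZ (f + 1)
      have : Z ⊆ C (f + 1) := by
        have : C (f + 1) = Z := Finset.eq_of_subset_of_card_le hsub (by omega)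
        exact this ▸ Finset.Subset.refl _
      exact hfull_term (f + 1) this
  exact tmono (f + 1) (min (f + 2) (t + 1)) (by omega) key
end

section
/- Termination synchrony lemma: in a synchronous system where each non-faulty node sends 'done' to all when ready, relays 'done' upon receiving t + 1 'done' messages, and halts upon receiving 2t + 1 'done' messages, with at most t faulty nodes and at least n - t ≥ 2t + 1 non-faulty nodes: if i is the first round in which some non-faulty node halts, then every non-faulty node halts in round i or round i + 1. -/
open Finset
open scoped Classical

theorem stmt_19 {ι : Type*} [Fintype ι] (n t : ℕ)
    (hn : Fintype.card ι = n) (ht : 3 * t < n)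
    (Z : Finset ι) (hZ : Z.card ≤ t)
    -- `done q p r` : node `q` sends a "done" message to node `p` in round `r`
    (done : ι → ι → ℕ → Prop)
    -- `halted p r` : node `p` has halted by the end of round `r`
    (halted : ι → ℕ → Prop)
    -- non-faulty nodes broadcast: they send "done" to everyone or to no one
    (hbcast : ∀ q, q ∉ Z → ∀ p p' r, done q p r → done q p' r)
    -- a non-faulty node halts exactly when it has received "done" from ≥ 2t+1 distinct senders
    (hhalt : ∀ p, p ∉ Z → ∀ r,
      (halted p r ↔ 2 * t + 1 ≤ (univ.filter (fun q => ∃ r' ≤ r, done q p r')).card))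
    -- a non-faulty node that has received "done" from ≥ t+1 distinct senders relays "done"
    (hrelay : ∀ p, p ∉ Z → ∀ r,
      t + 1 ≤ (univ.filter (fun q => ∃ r' ≤ r, done q p r')).card →
        ∀ p'', done p p'' (r + 1)) :
    -- if some non-faulty node halts by round `i`, every non-faulty node halts by round `i+1`
    ∀ i : ℕ, (∃ p, p ∉ Z ∧ halted p i) → ∀ q, q ∉ Z → halted q (i + 1) := by
  rintro i ⟨p, hp, hph⟩ q hq
  -- senders that p heard from by round i
  set S := univ.filter (fun q => ∃ r' ≤ i, done q p r') with hS
  have hScard : 2 * t + 1 ≤ S.card := (hhalt p hp i).mp hph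
  have hSZ : t + 1 ≤ (S \ Z).card := by
    have := Finset.le_card_sdiff Z S
    omega
  -- every non-faulty node hears from at least t+1 senders by round i
  have hsend : ∀ p', p' ∉ Z → ∀ p'', done p' p'' (i + 1) := by
    intro p' hp'
    apply hrelay p' hp' i
    calc t + 1 ≤ (S \ Z).card := hSZ
      _ ≤ _ := by
        apply Finset.card_le_card
        intro x hx
        rcases Finset.mem_sdiff.mp hx with ⟨hxS, hxZ⟩
        rcases (Finset.mem_filter.mp hxS).2 with ⟨r', hr', hd⟩
        exact Finset.mem_filter.mpr ⟨Finset.mem_univ _, r', hr', hbcast x hxZ p p' r' hd⟩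
  -- conclude q halts by round i+1
  rw [hhalt q hq (i + 1)]
  have hsub : Zᶜ ⊆ univ.filter (fun q' => ∃ r' ≤ i + 1, done q' q r') := by
    intro x hx
    have hxZ : x ∉ Z := Finset.mem_compl.mp hx
    exact Finset.mem_filter.mpr ⟨Finset.mem_univ _, i + 1, le_refl _, hsend x hxZ q⟩
  have hcc : Zᶜ.card = n - Z.card := by
    rw [Finset.card_compl, hn]
  have := Finset.card_le_card hsub
  omega
end
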